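/- arXiv:0809.4099 — 8 statements merged into one kernel-verified Lean document; each statement's English description precedes it below -/
import Mathlib

section
/- Let X be a median algebra and let m be the median of x, y, z. If v ∈ [y,z], then m ∈ [x,v]. -/
/-! Let `n` be the median of `x, y, v` and `q` the median of `z, n, x`. Since `v ∈ [y,z]`, the
axiom (MA3) puts `q` in `[x,y]`, `[y,z]` and `[z,x]`, so `q = m` by uniqueness of medians;
and `q ∈ [x,n] ⊆ [x,v]`. -/

structure MedianAlgebra (X : Type*) where
  interval : X → X → Set X
  ma1 : ∀ x, interval x x = {x}
  ma2 : ∀ x y, interval x y = interval y x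
  ma3 : ∀ x y z, z ∈ interval x y → interval x z ⊆ interval x y
  ma4 : ∀ x y z, ∃! m, m ∈ interval x y ∧ m ∈ interval y z ∧ m ∈ interval z x

namespace MedianAlgebra

variable {X : Type*} (M : MedianAlgebra X)

def IsMedian (x y z m : X) : Prop :=
  m ∈ M.interval x y ∧ m ∈ M.interval y z ∧ m ∈ M.interval z x

theorem mem_interval_comm {x y w : X} : w ∈ M.interval x y ↔ w ∈ M.interval y x := by
  rw [M.ma2]

theorem exists_isMedian (x y z : X) : ∃ m, M.IsMedian x y z m :=
  (M.ma4 x y z).exists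

variable {M} in
theorem IsMedian.eq {x y z m m' : X} (h : M.IsMedian x y z m) (h' : M.IsMedian x y z m') :
    m = m' :=
  (M.ma4 x y z).unique h h'

end MedianAlgebra

/-- If `m` is the median of `x, y, z` and `v ∈ [y,z]`, then `m ∈ [x,v]`. -/
theorem stmt1 {X : Type*} (M : MedianAlgebra X) (x y z m v : X)
    (hm : m ∈ M.interval x y ∧ m ∈ M.interval y z ∧ m ∈ M.interval z x)
    (hv : v ∈ M.interval y z) :
    m ∈ M.interval x v := by
  obtain ⟨n, hnxy, hnyv, hnvx⟩ := M.exists_isMedian x y v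
  obtain ⟨q, hqzn, hqnx, hqxz⟩ := M.exists_isMedian z n x
  have hqxn : q ∈ M.interval x n := M.mem_interval_comm.1 hqnx
  have hnzy : n ∈ M.interval z y := M.mem_interval_comm.1 (M.ma3 y z v hv hnyv)
  have hq : M.IsMedian x y z q :=
    ⟨M.ma3 x y n hnxy hqxn, M.mem_interval_comm.1 (M.ma3 z y n hnzy hqzn),
      M.mem_interval_comm.1 hqxz⟩
  rw [← hq.eq hm]
  exact M.ma3 x v n (M.mem_interval_comm.1 hnvx) hqxn
end

section
/- In a median algebra, the median closure of a finite subset is finite. -/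
/-- The median of three points. -/
noncomputable def MedianAlgebra.med {X : Type*} (M : MedianAlgebra X) (x y z : X) : X :=
  (M.ma4 x y z).choose

/-- The median closure of a subset: the smallest subset containing it that is
stable under taking medians of triples. -/
def MedianAlgebra.medClosure {X : Type*} (M : MedianAlgebra X) (A : Set X) : Set X :=
  ⋂₀ {B | A ⊆ B ∧ ∀ x ∈ B, ∀ y ∈ B, ∀ z ∈ B, M.med x y z ∈ B}

/-!
Fix a point `a`. The relation `x ∈ [a, y]` is the order of a meet-semilattice whose meet is
`x ⊓ y = med a x y`, and medians distribute over this meet: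
`med (x ⊓ y) v w = med x v w ⊓ med y v w`. Hence, if `B` is closed under medians, so is the
`⊓`-closure of `B ∪ {a}`, by inducting on the way each of the three arguments is built from
generators. This `⊓`-closure is finite when `B` is, since a finitely generated semilattice is
finite, and it contains the median closure of `A ∪ {a}` when `A ⊆ B`; induct on `A`.
-/

namespace MedianAlgebra

variable {X : Type*} (M : MedianAlgebra X)

section Intervals

variable {x y z u v w m : X}

lemma med_mem_interval₁₂ (x y z : X) : M.med x y z ∈ M.interval x y :=
  (M.ma4 x y z).choose_spec.1.1

lemma med_mem_interval₂₃ (x y z : X) : M.med x y z ∈ M.interval y z :=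
  (M.ma4 x y z).choose_spec.1.2.1

lemma med_mem_interval₃₁ (x y z : X) : M.med x y z ∈ M.interval z x :=
  (M.ma4 x y z).choose_spec.1.2.2

lemma eq_med (h₁ : m ∈ M.interval x y) (h₂ : m ∈ M.interval y z) (h₃ : m ∈ M.interval z x) :
    m = M.med x y z :=
  (M.ma4 x y z).unique ⟨h₁, h₂, h₃⟩
    ⟨M.med_mem_interval₁₂ x y z, M.med_mem_interval₂₃ x y z, M.med_mem_interval₃₁ x y z⟩

lemma mem_interval_symm (h : u ∈ M.interval x y) : u ∈ M.interval y x := by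
  rwa [M.ma2]

lemma mem_interval_trans (h : z ∈ M.interval x y) (h' : w ∈ M.interval x z) :
    w ∈ M.interval x y :=
  M.ma3 x y z h h'

lemma left_mem_interval (x y : X) : x ∈ M.interval x y := by
  have hx : M.med x x y = x := by simpa [M.ma1] using M.med_mem_interval₁₂ x x y
  simpa [hx] using M.med_mem_interval₂₃ x x y

lemma right_mem_interval (x y : X) : y ∈ M.interval x y :=
  M.mem_interval_symm (M.left_mem_interval y x)

lemma med_comm_left (x y z : X) : M.med x y z = M.med y x z :=
  M.eq_med (M.mem_interval_symm (M.med_mem_interval₁₂ x y z))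
    (M.mem_interval_symm (M.med_mem_interval₃₁ x y z))
    (M.mem_interval_symm (M.med_mem_interval₂₃ x y z))

lemma med_comm_right (x y z : X) : M.med x y z = M.med x z y :=
  M.eq_med (M.mem_interval_symm (M.med_mem_interval₃₁ x y z))
    (M.mem_interval_symm (M.med_mem_interval₂₃ x y z))
    (M.mem_interval_symm (M.med_mem_interval₁₂ x y z))

lemma med_rotate (x y z : X) : M.med x y z = M.med y z x := by
  rw [M.med_comm_left, M.med_comm_right]

lemma eq_of_mem_interval_of_mem_interval (h₁ : u ∈ M.interval x v) (h₂ : v ∈ M.interval x u) :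
    u = v :=
  (M.eq_med (M.right_mem_interval x u) (M.left_mem_interval u v) (M.mem_interval_symm h₁)).trans
    (M.eq_med h₂ (M.right_mem_interval u v) (M.left_mem_interval v x)).symm

lemma mem_interval_shift (hu : u ∈ M.interval x y) (hy : y ∈ M.interval x v) :
    y ∈ M.interval u v := by
  have hw₁ := M.med_mem_interval₁₂ u y v
  have hw₂ := M.med_mem_interval₂₃ u y v
  have hwxy : M.med u y v ∈ M.interval x y :=
    M.mem_interval_symm (M.mem_interval_trans (M.mem_interval_symm hu) (M.mem_interval_symm hw₁))
  have hwvx : M.med u y v ∈ M.interval v x :=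
    M.mem_interval_trans (M.mem_interval_symm hy) (M.mem_interval_symm hw₂)
  have hy_eq : y = M.med u y v :=
    (M.eq_med (M.right_mem_interval x y) (M.left_mem_interval y v) (M.mem_interval_symm hy)).trans
      (M.eq_med hwxy hw₂ hwvx).symm
  rw [hy_eq]
  exact M.mem_interval_symm (M.med_mem_interval₃₁ u y v)

lemma mem_interval_med {a : X} (hx : m ∈ M.interval a x) (hy : m ∈ M.interval a y) :
    m ∈ M.interval a (M.med a x y) := by
  have hu₁ := M.med_mem_interval₁₂ m x y
  have hxa : M.med m x y ∈ M.interval x a :=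
    M.mem_interval_trans (M.mem_interval_symm hx) (M.mem_interval_symm hu₁)
  have hya : M.med m x y ∈ M.interval y a :=
    M.mem_interval_trans (M.mem_interval_symm hy) (M.med_mem_interval₃₁ m x y)
  have hmed : M.med m x y = M.med a x y :=
    M.eq_med (M.mem_interval_symm hxa) (M.med_mem_interval₂₃ m x y) hya
  rw [hmed] at hu₁
  exact M.mem_interval_symm
    (M.mem_interval_shift (M.mem_interval_symm hu₁) (M.mem_interval_symm hx))

/-- `med r z w` is the gate of `r` in the interval `[z, w]`. -/
lemma med_mem_interval_of_mem (r : X) (hu : u ∈ M.interval z w) :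
    M.med r z w ∈ M.interval r u := by
  set g := M.med u r w
  have hgzw : g ∈ M.interval z w := M.mem_interval_symm
    (M.mem_interval_trans (M.mem_interval_symm hu) (M.med_mem_interval₃₁ u r w))
  have hzw : M.med r z g ∈ M.interval z w :=
    M.mem_interval_trans hgzw (M.med_mem_interval₂₃ r z g)
  have hrg : M.med r z g ∈ M.interval r g := M.mem_interval_symm (M.med_mem_interval₃₁ r z g)
  have hwr : M.med r z g ∈ M.interval w r :=
    M.mem_interval_symm (M.mem_interval_trans (M.med_mem_interval₂₃ u r w) hrg)
  rw [← M.eq_med (M.med_mem_interval₁₂ r z g) hzw hwr]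
  exact M.mem_interval_trans (M.mem_interval_symm (M.med_mem_interval₁₂ u r w)) hrg

end Intervals

section Distributivity

variable {a x y u v w : X}

/-- Medians with `v, w` are monotone for the order `x ≤ y ↔ x ∈ [a, y]`. -/
lemma med_mono (v w : X) (hu : u ∈ M.interval a x) :
    M.med u v w ∈ M.interval a (M.med x v w) := by
  set p := M.med u v w
  set q := M.med x v w
  have hp : p ∈ M.interval u q := M.med_mem_interval_of_mem u (M.med_mem_interval₂₃ x v w)
  have hq : q ∈ M.interval x p := M.med_mem_interval_of_mem x (M.med_mem_interval₂₃ u v w)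
  set k := M.med a p q
  have hk := M.med_mem_interval₂₃ a p q
  have hkx : k ∈ M.interval p x := M.mem_interval_trans (M.mem_interval_symm hq) hk
  have hku : k ∈ M.interval p u := M.mem_interval_trans (M.med_mem_interval_of_mem p hu)
    (M.mem_interval_med (M.mem_interval_symm (M.med_mem_interval₁₂ a p q)) hkx)
  have hqu : k ∈ M.interval q u :=
    M.mem_interval_trans (M.mem_interval_symm hp) (M.mem_interval_symm hk)
  have hpk : p = k :=
    (M.eq_med (M.right_mem_interval u p) (M.left_mem_interval p q) (M.mem_interval_symm hp)).trans
      (M.eq_med (M.mem_interval_symm hku) hk hqu).symm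
  rw [hpk]
  exact M.mem_interval_symm (M.med_mem_interval₃₁ a p q)

lemma med_mem_interval_med_med (v w : X) (hu : u ∈ M.interval x y) :
    M.med u v w ∈ M.interval (M.med x v w) (M.med y v w) :=
  M.mem_interval_shift (M.med_mem_interval_of_mem x (M.med_mem_interval₂₃ u v w))
    (M.med_mono v w hu)

lemma med_med_distrib (a x y v w : X) :
    M.med (M.med a x y) v w = M.med a (M.med x v w) (M.med y v w) :=
  M.eq_med (M.med_mono v w (M.med_mem_interval₁₂ a x y))
    (M.med_mem_interval_med_med v w (M.med_mem_interval₂₃ a x y))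
    (M.mem_interval_symm (M.med_mono v w (M.mem_interval_symm (M.med_mem_interval₃₁ a x y))))

end Distributivity

noncomputable abbrev semilatticeInfAt (a : X) : SemilatticeInf X where
  le x y := x ∈ M.interval a y
  le_refl x := M.right_mem_interval a x
  le_trans _ _ _ hxy hyz := M.mem_interval_trans hyz hxy
  le_antisymm _ _ h₁ h₂ := M.eq_of_mem_interval_of_mem_interval h₁ h₂
  inf x y := M.med a x y
  inf_le_left x y := M.med_mem_interval₁₂ a x y
  inf_le_right x y := M.mem_interval_symm (M.med_mem_interval₃₁ a x y)
  le_inf _ _ _ h₁ h₂ := M.mem_interval_med h₁ h₂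

def meetClosure (a : X) (T : Set X) : Set X :=
  letI := M.semilatticeInfAt a
  infClosure T

def IsMedClosed (B : Set X) : Prop :=
  ∀ x ∈ B, ∀ y ∈ B, ∀ z ∈ B, M.med x y z ∈ B

section MeetClosure

variable {a x y : X} {T : Set X}

lemma subset_meetClosure (a : X) (T : Set X) : T ⊆ M.meetClosure a T :=
  letI := M.semilatticeInfAt a
  subset_infClosure

lemma med_mem_meetClosure (hx : x ∈ M.meetClosure a T) (hy : y ∈ M.meetClosure a T) :
    M.med a x y ∈ M.meetClosure a T :=
  letI := M.semilatticeInfAt a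
  infClosed_infClosure hx hy

lemma finite_meetClosure (a : X) (hT : T.Finite) : (M.meetClosure a T).Finite :=
  letI := M.semilatticeInfAt a
  hT.infClosure

lemma meetClosure_induction {P : X → Prop} (hT : ∀ x ∈ T, P x)
    (hP : ∀ x y, P x → P y → P (M.med a x y)) : ∀ x ∈ M.meetClosure a T, P x :=
  letI := M.semilatticeInfAt a
  infClosure_min (t := {x | P x}) hT fun x hx y hy => hP x y hx hy

lemma med_mem_meetClosure_of_forall_mem {S₁ S₂ : Set X}
    (h : ∀ x ∈ T, ∀ v ∈ S₁, ∀ w ∈ S₂, M.med x v w ∈ M.meetClosure a T) :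
    ∀ x ∈ M.meetClosure a T, ∀ v ∈ S₁, ∀ w ∈ S₂, M.med x v w ∈ M.meetClosure a T :=
  M.meetClosure_induction h fun x y hx hy v hv w hw => by
    rw [M.med_med_distrib]
    exact M.med_mem_meetClosure (hx v hv w hw) (hy v hv w hw)

lemma isMedClosed_meetClosure
    (hT : ∀ u ∈ T, ∀ v ∈ T, ∀ w ∈ T, M.med u v w ∈ M.meetClosure a T) :
    M.IsMedClosed (M.meetClosure a T) := by
  have h₁ := M.med_mem_meetClosure_of_forall_mem hT
  have h₂ := M.med_mem_meetClosure_of_forall_mem (S₁ := M.meetClosure a T) (S₂ := T)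
    fun y hy x hx w hw => M.med_comm_left x y w ▸ h₁ x hx y hy w hw
  exact M.med_mem_meetClosure_of_forall_mem fun z hz x hx y hy =>
    (M.med_rotate z x y).symm ▸ h₂ x hx y hy z hz

end MeetClosure

section MedClosure

variable {A B : Set X}

lemma subset_medClosure (A : Set X) : A ⊆ M.medClosure A :=
  fun _ hx _ hB => hB.1 hx

lemma isMedClosed_medClosure (A : Set X) : M.IsMedClosed (M.medClosure A) :=
  fun x hx y hy z hz B hB => hB.2 x (hx B hB) y (hy B hB) z (hz B hB)

lemma medClosure_subset (hAB : A ⊆ B) (hB : M.IsMedClosed B) : M.medClosure A ⊆ B :=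
  fun _ hx => hx B ⟨hAB, hB⟩

lemma medClosure_insert_subset (a : X) (A : Set X) :
    M.medClosure (insert a A) ⊆ M.meetClosure a (insert a (M.medClosure A)) := by
  set T := insert a (M.medClosure A)
  have hT := M.subset_meetClosure a T
  refine M.medClosure_subset
    ((Set.insert_subset_insert (M.subset_medClosure A)).trans hT) (M.isMedClosed_meetClosure ?_)
  have ha : ∀ v ∈ T, ∀ w ∈ T, M.med a v w ∈ M.meetClosure a T :=
    fun v hv w hw => M.med_mem_meetClosure (hT hv) (hT hw)
  intro u hu v hv w hw
  rcases hu with rfl | hu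
  · exact ha v hv w hw
  rcases hv with rfl | hv
  · exact M.med_comm_left u v w ▸ ha u (Or.inr hu) w hw
  rcases hw with rfl | hw
  · exact (M.med_rotate w u v) ▸ ha u (Or.inr hu) v (Or.inr hv)
  exact hT (Or.inr (M.isMedClosed_medClosure A u hu v hv w hw))

end MedClosure

end MedianAlgebra

/-- In a median algebra, the median closure of a finite subset is finite. -/
theorem stmt2 {X : Type*} (M : MedianAlgebra X) (A : Set X) (hA : A.Finite) :
    (M.medClosure A).Finite := by
  induction A, hA using Set.Finite.induction_on with
  | empty => exact Set.finite_empty.subset (M.medClosure_subset subset_rfl fun _ h => h.elim)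
  | @insert a A _ _ hB =>
    exact (M.finite_meetClosure a (hB.insert a)).subset (M.medClosure_insert_subset a A)
end

section
/- In a median metric space, if m is the median of x, y, z, then for every point v: d(v,m) ≤ (d(v,x)+d(v,y)+d(v,z)) − (d(m,x)+d(m,y)+d(m,z)). -/
/-!
Let `p` be the median of `v, x, y`. The key fact is that `m` lies on the interval `[p, z]`: the
median of `x, y, z` may be reached from any point `p` of `[x, y]` by two further median steps
towards `z`, each of which stays inside the intervals spanned by `x, y, z`. Since `p ∈ [v, x]`,
`p ∈ [v, y]` and `p ∈ [x, y]`, we get `d(v,x) + d(v,y) = 2 d(v,p) + d(m,x) + d(m,y)`, and the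
inequality follows from `d(v,m) ≤ d(v,p) + d(p,m)` and `d(p,m) + d(m,z) = d(p,z) ≤ d(p,v) + d(v,z)`.
-/

def IsMedianSpace (X : Type*) [MetricSpace X] : Prop :=
  ∀ x y z : X, ∃! m : X,
    dist x m + dist m y = dist x y ∧
    dist y m + dist m z = dist y z ∧
    dist z m + dist m x = dist z x

section MedianSpace

variable {X : Type*} [MetricSpace X]

def geodesicInterval (x y : X) : Set X := {t | dist x t + dist t y = dist x y}

theorem mem_geodesicInterval_comm {x y t : X} :
    t ∈ geodesicInterval x y ↔ t ∈ geodesicInterval y x := by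
  simp only [geodesicInterval, Set.mem_ofPred_eq, dist_comm y, dist_comm t x]
  rw [add_comm]

theorem mem_geodesicInterval_of_mem_of_mem {a b s t : X} (ht : t ∈ geodesicInterval a s)
    (hs : s ∈ geodesicInterval a b) : t ∈ geodesicInterval a b := by
  have htb := dist_triangle t s b
  have hab := dist_triangle a t b
  simp only [geodesicInterval, Set.mem_ofPred_eq] at ht hs ⊢
  linarith

def IsMedian (x y z m : X) : Prop :=
  m ∈ geodesicInterval x y ∧ m ∈ geodesicInterval y z ∧ m ∈ geodesicInterval z x

theorem IsMedianSpace.existsUnique_isMedian (hX : IsMedianSpace X) (x y z : X) :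
    ∃! m, IsMedian x y z m :=
  hX x y z

theorem IsMedianSpace.isMedian_mem_geodesicInterval (hX : IsMedianSpace X) {x y z m p : X}
    (hm : IsMedian x y z m) (hp : p ∈ geodesicInterval x y) : m ∈ geodesicInterval z p := by
  obtain ⟨n, ⟨hpz, hzx, hxp⟩, -⟩ := hX.existsUnique_isMedian p z x
  obtain ⟨q, ⟨hnz, hzy, hyn⟩, -⟩ := hX.existsUnique_isMedian n z y
  have hn_xy : n ∈ geodesicInterval x y := mem_geodesicInterval_of_mem_of_mem hxp hp
  have hq_zn : q ∈ geodesicInterval z n := mem_geodesicInterval_comm.mp hnz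
  have hq_median : IsMedian x y z q :=
    ⟨mem_geodesicInterval_comm.mp
      (mem_geodesicInterval_of_mem_of_mem hyn (mem_geodesicInterval_comm.mp hn_xy)),
    mem_geodesicInterval_comm.mp hzy, mem_geodesicInterval_of_mem_of_mem hq_zn hzx⟩
  obtain rfl : q = m := (hX.existsUnique_isMedian x y z).unique hq_median hm
  exact mem_geodesicInterval_of_mem_of_mem hq_zn (mem_geodesicInterval_comm.mp hpz)

end MedianSpace

/-- In a median metric space, if `m` is the median of `x, y, z`, then for every `v`:
`d(v,m) ≤ (d(v,x)+d(v,y)+d(v,z)) − (d(m,x)+d(m,y)+d(m,z))`. -/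
theorem stmt9 {X : Type*} [MetricSpace X] (hX : IsMedianSpace X) (x y z m : X)
    (hm : dist x m + dist m y = dist x y ∧
          dist y m + dist m z = dist y z ∧
          dist z m + dist m x = dist z x)
    (v : X) :
    dist v m ≤ (dist v x + dist v y + dist v z) - (dist m x + dist m y + dist m z) := by
  obtain ⟨p, ⟨hp_vx, hp_xy, hp_yv⟩, -⟩ := hX.existsUnique_isMedian v x y
  have hm_zp : dist z m + dist m p = dist z p := hX.isMedian_mem_geodesicInterval hm hp_xy
  have hm_xy : dist x m + dist m y = dist x y := hm.1
  have hp_vx : dist v p + dist p x = dist v x := hp_vx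
  have hp_xy : dist x p + dist p y = dist x y := hp_xy
  have hp_yv : dist y p + dist p v = dist y v := hp_yv
  have hvm := dist_triangle v p m
  have hzp := dist_triangle z v p
  simp only [dist_comm] at *
  linarith
end

section
/- The metric completion of a median metric space is a median metric space. -/
/-!
For a triple `x, y, z` let `medianDefect x y z v = Σ dist v · - Σ dist m ·`, where `m` is any
median of the triple; it vanishes exactly at the medians. In a median space every point satisfies
`dist v m ≤ medianDefect x y z v`: the median `w` of `v, y, z` lies on `[y, z]`, so `m`, the gate
of `x` on `[y, z]`, lies between `x` and `w`. Hence `dist v w ≤ medianDefect v + medianDefect w`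
for all `v, w`, a closed condition that passes to the completion by density. In the completion
the medians of nearby triples of `X` have arbitrarily small defect, so a minimizing sequence is
Cauchy and its limit is the unique zero of the defect.
-/

open UniformSpace Filter Topology

def Between {X : Type*} [PseudoMetricSpace X] (x y z : X) : Prop :=
  dist x y + dist y z = dist x z

namespace Between

variable {X : Type*} [PseudoMetricSpace X] {w x y z : X}

lemma symm (h : Between x y z) : Between z y x := by
  unfold Between at *
  rw [dist_comm z y, dist_comm y x, dist_comm z x]
  linarith

lemma trans_left (h₁ : Between w y z) (h₂ : Between w x y) : Between w x z := by
  unfold Between at *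
  linarith [dist_triangle x y z, dist_triangle w x z]

lemma trans_left_right (h₁ : Between w y z) (h₂ : Between w x y) : Between x y z := by
  unfold Between at *
  linarith [dist_triangle w x z, dist_triangle x y z]

end Between

section MedianDefect

variable {X : Type*} [PseudoMetricSpace X]

noncomputable def medianDefect (x y z v : X) : ℝ :=
  dist v x + dist v y + dist v z - (dist x y + dist y z + dist z x) / 2

lemma medianDefect_eq_zero_iff {x y z m : X} :
    medianDefect x y z m = 0 ↔ Between x m y ∧ Between y m z ∧ Between z m x := by
  unfold medianDefect Between
  have := dist_comm m x; have := dist_comm m y; have := dist_comm m z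
  have := dist_triangle x m y; have := dist_triangle y m z; have := dist_triangle z m x
  constructor
  · intro h
    refine ⟨?_, ?_, ?_⟩ <;> linarith
  · rintro ⟨h₁, h₂, h₃⟩
    linarith

lemma medianDefect_le_add (x y z x' y' z' v : X) :
    medianDefect x y z v ≤ medianDefect x' y' z' v + 2 * (dist x x' + dist y y' + dist z z') := by
  unfold medianDefect
  linarith [dist_triangle v x' x, dist_triangle v y' y, dist_triangle v z' z,
    dist_triangle4 x' x y y', dist_triangle4 y' y z z', dist_triangle4 z' z x x',
    dist_comm x x', dist_comm y y', dist_comm z z']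

@[fun_prop]
lemma Continuous.medianDefect {α : Type*} [TopologicalSpace α] {f g h k : α → X}
    (hf : Continuous f) (hg : Continuous g) (hh : Continuous h) (hk : Continuous k) :
    Continuous fun a => medianDefect (f a) (g a) (h a) (k a) := by
  unfold _root_.medianDefect
  fun_prop

lemma medianDefect_coe (x y z v : X) :
    medianDefect (x : Completion X) y z v = medianDefect x y z v := by
  simp only [medianDefect, Completion.dist_eq]

end MedianDefect

lemma existsUnique_eq_zero_of_dist_le_add {Y : Type*} [MetricSpace Y] [CompleteSpace Y]
    {f : Y → ℝ} (hf : Continuous f) (hdist : ∀ v w, dist v w ≤ f v + f w)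
    (hsmall : ∀ ε > 0, ∃ v, f v < ε) : ∃! v, f v = 0 := by
  have hnonneg (v : Y) : 0 ≤ f v := by linarith [hdist v v, dist_self v]
  choose u hu using fun n : ℕ => hsmall (1 / ((n : ℝ) + 1)) Nat.one_div_pos_of_nat
  have hu0 : Tendsto (fun n => f (u n)) atTop (𝓝 0) :=
    squeeze_zero (fun n => hnonneg _) (fun n => (hu n).le)
      tendsto_one_div_add_atTop_nhds_zero_nat
  have hcauchy : CauchySeq u := by
    refine cauchySeq_of_le_tendsto_0 (fun N : ℕ => 2 * (1 / ((N : ℝ) + 1))) (fun n m N hn hm => ?_)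
      (by simpa using tendsto_one_div_add_atTop_nhds_zero_nat.const_mul (2 : ℝ))
    linarith [hdist (u n) (u m), hu n, hu m, Nat.one_div_le_one_div (α := ℝ) hn,
      Nat.one_div_le_one_div (α := ℝ) hm]
  obtain ⟨v, hv⟩ := cauchySeq_tendsto_of_complete hcauchy
  have hv₀ : f v = 0 := tendsto_nhds_unique ((hf.tendsto v).comp hv) hu0
  exact ⟨v, hv₀, fun w hw => dist_le_zero.mp (by linarith [hdist w v])⟩

namespace IsMedianSpace

variable {X : Type*} [MetricSpace X]

lemma between_of_between_median (hX : IsMedianSpace X) {a b c w m : X} (hw : Between b w c)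
    (hm : Between a m b ∧ Between b m c ∧ Between c m a) : Between a m w := by
  obtain ⟨p, ⟨hp₁, hp₂, hp₃⟩, -⟩ : ∃! p, Between b p w ∧ Between w p a ∧ Between a p b :=
    hX b w a
  obtain ⟨q, ⟨hq₁, hq₂, hq₃⟩, -⟩ : ∃! q, Between c q w ∧ Between w q a ∧ Between a q c :=
    hX c w a
  obtain ⟨P, ⟨hP₁, hP₂, hP₃⟩, -⟩ : ∃! P, Between p P q ∧ Between q P a ∧ Between a P p :=
    hX p q a
  have hwpq : Between p w q := ((hw.trans_left_right hp₁).symm.trans_left_right hq₁).symm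
  have hbPc : Between b P c := by
    have hwqc : Between w q c := hq₁.symm
    unfold Between at *
    linarith [dist_triangle b p P, dist_triangle P q c, dist_triangle b P c]
  have hmP : m = P :=
    (hX a b c).unique hm ⟨hp₃.trans_left hP₃, hbPc, (hq₃.trans_left hP₂.symm).symm⟩
  exact hmP ▸ hp₂.symm.trans_left hP₃

lemma dist_le_medianDefect (hX : IsMedianSpace X) {a b c m : X}
    (hm : medianDefect a b c m = 0) (v : X) : dist v m ≤ medianDefect a b c v := by
  rw [medianDefect_eq_zero_iff] at hm
  obtain ⟨w, ⟨hw₁, hw₂, hw₃⟩, -⟩ : ∃! w, Between v w b ∧ Between b w c ∧ Between c w v :=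
    hX v b c
  have hgate : Between a m w := hX.between_of_between_median hw₂ hm
  obtain ⟨hm₁, hm₂, hm₃⟩ := hm
  unfold Between at *
  unfold medianDefect
  linarith [dist_triangle v w m, dist_triangle a v w, dist_comm a v, dist_comm c v, dist_comm v w,
    dist_comm w b, dist_comm c w, dist_comm b w, dist_comm m a, dist_comm m b, dist_comm m c,
    dist_comm w m]

lemma dist_le_medianDefect_add (hX : IsMedianSpace X) (x y z v w : X) :
    dist v w ≤ medianDefect x y z v + medianDefect x y z w := by
  obtain ⟨m, hm, -⟩ := hX x y z
  have hm₀ : medianDefect x y z m = 0 := medianDefect_eq_zero_iff.mpr hm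
  calc dist v w ≤ dist v m + dist w m := dist_triangle_right v w m
    _ ≤ _ := add_le_add (hX.dist_le_medianDefect hm₀ v) (hX.dist_le_medianDefect hm₀ w)

lemma completion_dist_le_medianDefect_add (hX : IsMedianSpace X) (x y z v w : Completion X) :
    dist v w ≤ medianDefect x y z v + medianDefect x y z w := by
  induction x, y, z using Completion.induction_on₃ with
  | hp => exact isClosed_le (by fun_prop) (by fun_prop)
  | ih a b c =>
    induction v, w using Completion.induction_on₂ with
    | hp => exact isClosed_le (by fun_prop) (by fun_prop)
    | ih v w =>
      simpa only [Completion.dist_eq, medianDefect_coe] using hX.dist_le_medianDefect_add a b c v w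

lemma completion_exists_medianDefect_lt (hX : IsMedianSpace X) (x y z : Completion X) {ε : ℝ}
    (hε : 0 < ε) : ∃ v, medianDefect x y z v < ε := by
  have hδ : 0 < ε / 6 := by positivity
  obtain ⟨a, ha⟩ := Metric.denseRange_iff.mp Completion.denseRange_coe x _ hδ
  obtain ⟨b, hb⟩ := Metric.denseRange_iff.mp Completion.denseRange_coe y _ hδ
  obtain ⟨c, hc⟩ := Metric.denseRange_iff.mp Completion.denseRange_coe z _ hδ
  obtain ⟨m, hm, -⟩ := hX a b c
  refine ⟨m, ?_⟩
  have := medianDefect_le_add x y z a b c (m : Completion X)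
  rw [medianDefect_coe, medianDefect_eq_zero_iff.mpr hm] at this
  linarith

end IsMedianSpace

/-- The metric completion of a median metric space is a median metric space. -/
theorem stmt11 {X : Type*} [MetricSpace X] (hX : IsMedianSpace X) :
    IsMedianSpace (UniformSpace.Completion X) := by
  intro x y z
  simpa only [medianDefect_eq_zero_iff, Between] using
    existsUnique_eq_zero_of_dist_le_add (f := medianDefect x y z) (by fun_prop)
      (hX.completion_dist_le_medianDefect_add x y z)
      fun _ => hX.completion_exists_medianDefect_lt x y z
end

section
/- Every median metric space is negative definite: for points x_1,...,x_n and reals α_1,...,α_n with Σα_i = 0, one has Σ_{i,j} α_i α_j d(x_i,x_j) ≤ 0. -/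
open Finset

section InclusionExclusion

variable {α ι : Type*} [DistribLattice α] [BoundedOrder α] [DecidableEq ι]

theorem Finset.sum_powerset_neg_one_pow_mul_inf_eq_sub_sup (v : α → ℝ) (hv₀ : v ⊥ = 0)
    (hv : ∀ a b, v (a ⊔ b) + v (a ⊓ b) = v a + v b) (f : ι → α) (s : Finset ι) (b : α) :
    ∑ U ∈ s.powerset, (-1) ^ #U * v (b ⊓ U.inf f) = v b - v (b ⊓ s.sup f) := by
  induction s using Finset.induction_on generalizing b with
  | empty => simp [hv₀]
  | insert k s hk ih =>
    have hU : ∀ U ∈ s.powerset, (-1) ^ #(insert k U) * v (b ⊓ (insert k U).inf f) =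
        -((-1) ^ #U * v ((b ⊓ f k) ⊓ U.inf f)) := by
      intro U hU
      have hkU : k ∉ U := fun h => hk (mem_powerset.mp hU h)
      rw [card_insert_of_notMem hkU, inf_insert, inf_assoc, pow_succ]
      ring
    have hsup := hv (b ⊓ f k) (b ⊓ s.sup f)
    rw [← inf_inf_distrib_left, ← inf_assoc, ← inf_sup_left] at hsup
    rw [sum_powerset_insert hk, sum_congr rfl hU, sum_neg_distrib, ih, ih, sup_insert]
    linarith

end InclusionExclusion

section Venn

variable {ι : Type*} [Fintype ι] [DecidableEq ι]

/-- When `F T` is the measure of the intersection of the sets indexed by `T`, this is the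
measure of the Venn cell of the points lying in exactly the sets indexed by `S`. -/
def vennCoeff (F : Finset ι → ℝ) (S : Finset ι) : ℝ :=
  ∑ U ∈ Sᶜ.powerset, (-1) ^ #U * F (S ∪ U)

lemma vennCoeff_eq_sum_superset (F : Finset ι → ℝ) (S : Finset ι) :
    vennCoeff F S = ∑ V with S ⊆ V, (-1) ^ #(V \ S) * F V := by
  refine sum_nbij' (S ∪ ·) (· \ S) ?_ ?_ ?_ ?_ ?_ <;> intro U hU
  · simp
  · simp [subset_iff]
  · simp only [mem_powerset, subset_compl_iff_disjoint_left] at hU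
    simp [union_sdiff_cancel_left hU]
  · simp [union_sdiff_of_subset (mem_filter.mp hU).2]
  · simp only [mem_powerset, subset_compl_iff_disjoint_left] at hU
    simp [union_sdiff_cancel_left hU]

lemma sum_neg_one_pow_card_sdiff_of_subset {T V : Finset ι} (hTV : T ⊆ V) :
    ∑ S with T ⊆ S ∧ S ⊆ V, (-1 : ℝ) ^ #(V \ S) = if V = T then 1 else 0 := by
  have : ∑ S with T ⊆ S ∧ S ⊆ V, (-1 : ℝ) ^ #(V \ S) = ∑ W ∈ (V \ T).powerset, (-1) ^ #W := by
    refine sum_nbij' (V \ ·) (V \ ·) ?_ ?_ ?_ ?_ (fun _ _ => rfl) <;> intro S hS <;>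
      simp only [mem_filter, mem_univ, true_and, mem_powerset] at hS ⊢
    · exact sdiff_subset_sdiff le_rfl hS.1
    · refine ⟨subset_sdiff.mpr ⟨hTV, ?_⟩, sdiff_subset⟩
      exact disjoint_of_subset_left hS disjoint_sdiff_self_left |>.symm
    · exact Finset.sdiff_sdiff_eq_self hS.2
    · exact Finset.sdiff_sdiff_eq_self (hS.trans sdiff_subset)
  rw [this]
  exact_mod_cast sum_powerset_neg_one_pow_card (x := V \ T) |>.trans
    (by simp [sdiff_eq_empty_iff_subset, hTV.ge_iff_eq'])

lemma sum_superset_vennCoeff (F : Finset ι → ℝ) (T : Finset ι) :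
    ∑ S with T ⊆ S, vennCoeff F S = F T := by
  simp_rw [vennCoeff_eq_sum_superset]
  rw [sum_comm' (t' := {V | T ⊆ V}) (s' := fun V => {S | T ⊆ S ∧ S ⊆ V})]
  · calc ∑ V with T ⊆ V, ∑ S with T ⊆ S ∧ S ⊆ V, (-1) ^ #(V \ S) * F V
        = ∑ V with T ⊆ V, if V = T then F V else 0 := by
          refine sum_congr rfl fun V hV => ?_
          rw [← sum_mul, sum_neg_one_pow_card_sdiff_of_subset (mem_filter.mp hV).2, ite_mul,
            one_mul, zero_mul]
      _ = F T := by simp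
  · intro S V
    simp only [mem_filter, mem_univ, true_and]
    exact ⟨fun ⟨hTS, hSV⟩ => ⟨⟨hTS, hSV⟩, hTS.trans hSV⟩, fun h => h.1⟩

theorem sum_mul_mul_pair_eq_sum_vennCoeff (F : Finset ι → ℝ) (α : ι → ℝ) :
    ∑ i, ∑ j, α i * α j * F {i, j} = ∑ S, vennCoeff F S * (∑ i ∈ S, α i) ^ 2 := by
  have hsq : ∀ S : Finset ι, vennCoeff F S * (∑ i ∈ S, α i) ^ 2 =
      ∑ i, ∑ j, if {i, j} ⊆ S then α i * α j * vennCoeff F S else 0 := by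
    intro S
    rw [sq, sum_mul_sum, mul_sum, ← sum_ite_mem_eq]
    refine sum_congr rfl fun i _ => ?_
    by_cases hi : i ∈ S
    · rw [if_pos hi, mul_sum, ← sum_ite_mem_eq]
      refine sum_congr rfl fun j _ => ?_
      simp only [insert_subset_iff, singleton_subset_iff, hi, true_and]
      split_ifs <;> ring
    · simp [hi, insert_subset_iff]
  calc ∑ i, ∑ j, α i * α j * F {i, j}
      = ∑ i, ∑ j, ∑ S : Finset ι, if {i, j} ⊆ S then α i * α j * vennCoeff F S else 0 := by
        refine sum_congr rfl fun i _ => sum_congr rfl fun j _ => ?_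
        rw [← sum_filter, ← mul_sum, sum_superset_vennCoeff]
    _ = ∑ i, ∑ S : Finset ι, ∑ j, if {i, j} ⊆ S then α i * α j * vennCoeff F S else 0 :=
        sum_congr rfl fun i _ => sum_comm
    _ = ∑ S : Finset ι, ∑ i, ∑ j, if {i, j} ⊆ S then α i * α j * vennCoeff F S else 0 := by
        rw [sum_comm]
    _ = ∑ S, vennCoeff F S * (∑ i ∈ S, α i) ^ 2 := sum_congr rfl fun S _ => (hsq S).symm

end Venn

namespace MedianSpace

variable {X : Type*} [MetricSpace X]

def Between (a b c : X) : Prop := dist a b + dist b c = dist a c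

lemma between_self_left (a b : X) : Between a a b := by simp [Between]

lemma between_self_right (a b : X) : Between a b b := by simp [Between]

namespace Between

variable {a b c w x y z : X}

lemma symm (h : Between a b c) : Between c b a := by
  unfold Between at *; rw [dist_comm c b, dist_comm b a, dist_comm c a]; linarith

lemma trans_left (h₁ : Between w y z) (h₂ : Between w x y) : Between w x z := by
  unfold Between at *
  linarith [dist_triangle w x z, dist_triangle x y z]

lemma trans_left_right (h₁ : Between w y z) (h₂ : Between w x y) : Between x y z := by
  unfold Between at *
  linarith [dist_triangle w x z, dist_triangle x y z]

lemma trans_right (h₁ : Between w x z) (h₂ : Between x y z) : Between w y z :=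
  (h₁.symm.trans_left h₂.symm).symm

lemma trans_right_left (h₁ : Between w x z) (h₂ : Between x y z) : Between w x y :=
  (h₁.symm.trans_left_right h₂.symm).symm

lemma antisymm (h₁ : Between w a b) (h₂ : Between w b a) : a = b := by
  unfold Between at *
  rw [dist_comm b a] at h₂
  exact dist_le_zero.mp (by linarith)

end Between

/-- `X` ordered from the base point `w`: `a ≤ b` when `a` lies between `w` and `b`. -/
def Based (_ : X) : Type _ := X

namespace Based

variable {w : X}

def of (w a : X) : Based w := a

instance : MetricSpace (Based w) := inferInstanceAs (MetricSpace X)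

instance [h : Fact (IsMedianSpace X)] : Fact (IsMedianSpace (Based w)) := h

lemma dist_of (a b : X) : dist (of w a) (of w b) = dist a b := rfl

instance : Bot (Based w) := ⟨of w w⟩

instance : PartialOrder (Based w) where
  le a b := Between ⊥ a b
  le_refl a := between_self_right ⊥ a
  le_trans _ _ _ hab hbc := hbc.trans_left hab
  le_antisymm _ _ hab hba := hab.antisymm hba

instance : OrderBot (Based w) where
  bot_le a := between_self_left ⊥ a

lemma le_def {a b : Based w} : a ≤ b ↔ Between ⊥ a b := Iff.rfl

lemma dist_eq_sub_of_le {a b : Based w} (h : a ≤ b) : dist a b = dist ⊥ b - dist ⊥ a := by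
  rw [le_def, Between] at h; linarith

lemma eq_of_le_of_dist_eq {a b : Based w} (h : a ≤ b) (hab : dist ⊥ a = dist ⊥ b) : a = b :=
  dist_eq_zero.mp (by rw [dist_eq_sub_of_le h, hab, sub_self])

lemma dist_bot_le_of_le {a b : Based w} (h : a ≤ b) : dist ⊥ a ≤ dist ⊥ b := by
  rw [← sub_nonneg, ← dist_eq_sub_of_le h]; exact dist_nonneg

end Based

variable [Fact (IsMedianSpace X)]

noncomputable def median (a b c : X) : X :=
  ((Fact.out : IsMedianSpace X) a b c).exists.choose

lemma between_median₁₂ (a b c : X) : Between a (median a b c) b :=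
  ((Fact.out : IsMedianSpace X) a b c).exists.choose_spec.1

lemma between_median₂₃ (a b c : X) : Between b (median a b c) c :=
  ((Fact.out : IsMedianSpace X) a b c).exists.choose_spec.2.1

lemma between_median₃₁ (a b c : X) : Between c (median a b c) a :=
  ((Fact.out : IsMedianSpace X) a b c).exists.choose_spec.2.2

lemma median_eq {a b c m : X} (h₁ : Between a m b) (h₂ : Between b m c) (h₃ : Between c m a) :
    median a b c = m :=
  ((Fact.out : IsMedianSpace X) a b c).unique
    ⟨between_median₁₂ a b c, between_median₂₃ a b c, between_median₃₁ a b c⟩ ⟨h₁, h₂, h₃⟩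

lemma median_comm₁₂ (a b c : X) : median a b c = median b a c :=
  median_eq (between_median₁₂ b a c).symm (between_median₃₁ b a c).symm
    (between_median₂₃ b a c).symm

namespace Based

variable {w : X}

noncomputable instance : SemilatticeInf (Based w) where
  inf a b := median ⊥ a b
  inf_le_left a b := between_median₁₂ ⊥ a b
  inf_le_right a b := (between_median₃₁ ⊥ a b).symm
  le_inf c a b hca hcb := by
    have h₁ := between_median₁₂ c a b
    have h₃ := (between_median₃₁ c a b).symm
    have : median ⊥ a b = median c a b :=
      median_eq (hca.trans_right h₁) (between_median₂₃ c a b) (hcb.trans_right h₃).symm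
    exact this ▸ hca.trans_right_left h₁

lemma between_inf (a b : Based w) : Between a (a ⊓ b) b := between_median₂₃ ⊥ a b

lemma dist_eq_add_sub_inf (a b : Based w) :
    dist a b = dist ⊥ a + dist ⊥ b - 2 * dist ⊥ (a ⊓ b) := by
  have h := between_inf a b
  have ha := dist_eq_sub_of_le (inf_le_left : a ⊓ b ≤ a)
  have hb := dist_eq_sub_of_le (inf_le_right : a ⊓ b ≤ b)
  rw [Between, dist_comm a] at h
  linarith

end Based

/-- `median a z b` is the gate of `z` in the interval between `a` and `b`. -/
lemma dist_eq_dist_median_add {a b z u : X} (hu : Between a u b) :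
    dist z u = dist z (median a z b) + dist (median a z b) u := by
  let z' := Based.of a z
  let u' := Based.of a u
  let b' := Based.of a b
  have hub : u' ≤ b' := hu
  have hρπ : z' ⊓ u' ≤ z' ⊓ b' := inf_le_inf_left _ hub
  have hπu : z' ⊓ b' ⊓ u' = z' ⊓ u' := by rw [inf_assoc, inf_eq_right.mpr hub]
  have h₁ : Between z' (z' ⊓ u') u' := Based.between_inf z' u'
  have h₂ : Between (z' ⊓ b') (z' ⊓ u') u' := hπu ▸ Based.between_inf (z' ⊓ b') u'
  have h₃ : Between (z' ⊓ u') (z' ⊓ b') z' :=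
    Between.trans_left_right (inf_le_left : z' ⊓ b' ≤ z') hρπ
  unfold Between at h₁ h₂ h₃
  have : dist z' u' = dist z' (z' ⊓ b') + dist (z' ⊓ b') u' := by
    rw [dist_comm (z' ⊓ u') z', dist_comm (z' ⊓ u') (z' ⊓ b')] at h₃
    linarith [dist_comm (z' ⊓ b') z']
  exact this

namespace Based

variable {w : X}

/-- Expanded with `dist_eq_add_sub_inf`, this is an identity between distances to the gates
`t` of `g` and `c = P ⊓ Q` of `⊥` in the interval between `P` and `Q`; it holds because `g`
lies between `⊥` and `t`, as `g ≤ s`. -/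
lemma dist_inf_add_dist_inf {P Q g s : Based w} (hgs : g ≤ s) (hs : Between P s Q) :
    dist ⊥ (P ⊓ g) + dist ⊥ (Q ⊓ g) = dist ⊥ g + dist ⊥ (P ⊓ Q ⊓ g) := by
  set t := median P g Q
  set c := P ⊓ Q
  have hc : median P ⊥ Q = c := (median_comm₁₂ _ _ _).symm
  have ht : Between P t Q := (between_median₃₁ P g Q).symm
  have hcPQ : Between P c Q := hc ▸ (between_median₃₁ P ⊥ Q).symm
  have gs := dist_eq_dist_median_add (z := g) hs
  have gP := dist_eq_dist_median_add (z := g) (between_self_left P Q)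
  have gQ := dist_eq_dist_median_add (z := g) (between_self_right P Q)
  have gc := dist_eq_dist_median_add (z := g) hcPQ
  have wt := dist_eq_dist_median_add (z := ⊥) ht
  rw [hc] at wt
  have cP := dist_eq_sub_of_le (inf_le_left : c ≤ P)
  have cQ := dist_eq_sub_of_le (inf_le_right : c ≤ Q)
  have Pg := dist_eq_add_sub_inf P g
  have Qg := dist_eq_add_sub_inf Q g
  have cg := dist_eq_add_sub_inf c g
  rw [le_def] at hgs
  unfold Between at hgs ht hcPQ
  linarith [dist_triangle ⊥ t s, dist_triangle ⊥ g t, dist_comm g t, dist_comm g P, dist_comm g Q,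
    dist_comm g c, dist_comm t P, dist_comm t Q, dist_comm t c, dist_comm c P]

lemma le_median_of_le {p b : Based w} (hp : p ≤ b) (q : Based w) : p ≤ median b p q :=
  Between.trans_right_left hp (between_median₁₂ b p q).symm

lemma median_le_of_le {p b : Based w} (hp : p ≤ b) (q : Based w) : median b p q ≤ b :=
  Between.trans_right hp (between_median₁₂ b p q).symm

noncomputable instance (b : Based w) : Lattice (Set.Iic b) where
  sup p q := ⟨median b p q, median_le_of_le p.2 q⟩
  le_sup_left p q := le_median_of_le p.2 q
  le_sup_right p q := Between.trans_right_left q.2 (between_median₃₁ b (p : Based w) q)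
  sup_le p q r hpr hqr := by
    set t := median (r : Based w) p q
    have hpt : (p : Based w) ≤ t := le_median_of_le hpr q
    have hqt : (q : Based w) ≤ t :=
      Between.trans_right_left hqr (between_median₃₁ (r : Based w) p q)
    have htr : t ≤ r := median_le_of_le hpr q
    have htb : t ≤ b := htr.trans r.2
    have : median b p q = t :=
      median_eq (Between.trans_left_right htb hpt).symm (between_median₂₃ (r : Based w) p q)
        (Between.trans_left_right htb hqt)
    show median b p q ≤ (r : Based w)
    exact this ▸ htr

lemma coe_sup {b : Based w} (p q : Set.Iic b) : ((p ⊔ q : Set.Iic b) : Based w) = median b p q :=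
  rfl

lemma dist_sup_add_dist_inf {b : Based w} (p q : Set.Iic b) :
    dist ⊥ ((p ⊔ q : Set.Iic b) : Based w) + dist ⊥ ((p ⊓ q : Set.Iic b) : Based w) =
      dist ⊥ (p : Based w) + dist ⊥ (q : Based w) := by
  have h := between_median₂₃ b (p : Based w) q
  have hp := dist_eq_sub_of_le (le_sup_left : p ≤ p ⊔ q)
  have hq := dist_eq_sub_of_le (le_sup_right : q ≤ p ⊔ q)
  have hpq := dist_eq_add_sub_inf (p : Based w) q
  rw [coe_sup] at hp hq ⊢
  unfold Between at h
  rw [dist_comm _ (q : Based w)] at h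
  simp only [Set.Iic.coe_inf]
  linarith

lemma inf_sup_le {b : Based w} (r p q : Set.Iic b) : r ⊓ (p ⊔ q) ≤ r ⊓ p ⊔ r ⊓ q := by
  set g := r ⊓ (p ⊔ q)
  have hjg : r ⊓ p ⊔ r ⊓ q ≤ g :=
    sup_le (inf_le_inf_left _ le_sup_left) (inf_le_inf_left _ le_sup_right)
  have hp : p ⊓ g = r ⊓ p := by rw [inf_left_comm, inf_sup_self]
  have hq : q ⊓ g = r ⊓ q := by rw [inf_left_comm, sup_comm, inf_sup_self]
  have hpq : p ⊓ q ⊓ g = r ⊓ p ⊓ (r ⊓ q) := by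
    rw [inf_left_comm, inf_eq_left.mpr (inf_le_left.trans le_sup_left), inf_inf_distrib_left,
      inf_assoc]
  have hcore : dist ⊥ ((p ⊓ g : Set.Iic b) : Based w) + dist ⊥ ((q ⊓ g : Set.Iic b) : Based w) =
      dist ⊥ (g : Based w) + dist ⊥ ((p ⊓ q ⊓ g : Set.Iic b) : Based w) :=
    dist_inf_add_dist_inf (inf_le_right : g ≤ p ⊔ q) (between_median₂₃ b (p : Based w) q)
  rw [hp, hq, hpq] at hcore
  have hmod := dist_sup_add_dist_inf (r ⊓ p) (r ⊓ q)
  refine le_of_eq (Subtype.ext (eq_of_le_of_dist_eq hjg ?_)).symm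
  linarith

noncomputable instance (b : Based w) : DistribLattice (Set.Iic b) :=
  .ofInfSupLe inf_sup_le

/-- The intersection over `S ∪ U` is computed in the distributive lattice below the
intersection `m` over `S`, where inclusion–exclusion applies. -/
lemma vennCoeff_nonneg {ι : Type*} [Fintype ι] [DecidableEq ι] (x : ι → Based w)
    {S : Finset ι} (hS : S.Nonempty) :
    0 ≤ vennCoeff (fun T => if h : T.Nonempty then dist ⊥ (T.inf' h x) else 0) S := by
  set m := S.inf' hS x
  let y : ι → Set.Iic m := fun i => ⟨m ⊓ x i, Set.mem_Iic.mpr inf_le_left⟩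
  let v : Set.Iic m → ℝ := fun p => dist ⊥ (p : Based w)
  have hy : ∀ U : Finset ι, ((U.inf y : Set.Iic m) : Based w) =
      (S ∪ U).inf' (hS.mono subset_union_left) x := by
    intro U
    refine le_antisymm (le_inf' _ _ fun i hi => ?_) ?_
    · rcases mem_union.mp hi with hi | hi
      · exact (U.inf y).2.trans (inf'_le x hi)
      · exact (show ((U.inf y : Set.Iic m) : Based w) ≤ m ⊓ x i from
          Finset.inf_le (f := y) hi).trans inf_le_right
    · have hm : (S ∪ U).inf' (hS.mono subset_union_left) x ≤ m :=
        le_inf' _ _ fun i hi => inf'_le x (mem_union_left U hi)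
      refine (Finset.le_inf fun i hi => ?_ : (⟨_, hm⟩ : Set.Iic m) ≤ U.inf y)
      exact _root_.le_inf hm (inf'_le x (mem_union_right S hi))
  have hsum := sum_powerset_neg_one_pow_mul_inf_eq_sub_sup v (dist_self _)
    dist_sup_add_dist_inf y Sᶜ ⊤
  simp only [top_inf_eq, v, hy] at hsum
  rw [vennCoeff]
  simp only [dif_pos (hS.mono subset_union_left), hsum]
  exact sub_nonneg.mpr (dist_bot_le_of_le (le_top : Sᶜ.sup y ≤ ⊤))

theorem sum_mul_mul_dist_inf_nonneg {ι : Type*} [Fintype ι] (x : ι → Based w) (α : ι → ℝ) :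
    0 ≤ ∑ i, ∑ j, α i * α j * dist ⊥ (x i ⊓ x j) := by
  classical
  let F : Finset ι → ℝ := fun T => if h : T.Nonempty then dist ⊥ (T.inf' h x) else 0
  have hF : ∀ i j, F {i, j} = dist ⊥ (x i ⊓ x j) := by simp [F]
  simp_rw [← hF, sum_mul_mul_pair_eq_sum_vennCoeff]
  refine sum_nonneg fun S _ => ?_
  rcases S.eq_empty_or_nonempty with rfl | hS
  · simp
  · exact mul_nonneg (vennCoeff_nonneg x hS) (sq_nonneg _)

end Based

theorem sum_mul_mul_dist_nonpos {ι : Type*} [Fintype ι] (x : ι → X) (α : ι → ℝ)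
    (hα : ∑ i, α i = 0) : ∑ i, ∑ j, α i * α j * dist (x i) (x j) ≤ 0 := by
  rcases isEmpty_or_nonempty ι with hι | ⟨⟨i₀⟩⟩
  · simp
  let y : ι → Based (x i₀) := fun i => Based.of _ (x i)
  have hdist : ∀ i j, α i * α j * dist (x i) (x j) = α i * (α j * dist ⊥ (y j)) +
      α j * (α i * dist ⊥ (y i)) - 2 * (α i * α j * dist ⊥ (y i ⊓ y j)) := by
    intro i j
    rw [← Based.dist_of, Based.dist_eq_add_sub_inf]
    ring
  have := Based.sum_mul_mul_dist_inf_nonneg y α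
  simp_rw [hdist, sum_sub_distrib, sum_add_distrib, ← mul_sum, ← sum_mul, hα]
  simp only [zero_mul, sum_const_zero, zero_add, zero_sub]
  linarith

end MedianSpace

/-- Every median metric space is negative definite. -/
theorem stmt12 {X : Type*} [MetricSpace X] (hX : IsMedianSpace X)
    (n : ℕ) (x : Fin n → X) (α : Fin n → ℝ) (hα : ∑ i, α i = 0) :
    ∑ i, ∑ j, α i * α j * dist (x i) (x j) ≤ 0 := by
  have : Fact (IsMedianSpace X) := ⟨hX⟩
  exact MedianSpace.sum_mul_mul_dist_nonpos x α hα
end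

section
/- Every hypermetric space is negative definite. -/
/-!
Adding the hypermetric inequalities for the weights `(1, t)` and `(1, -t)` at the points
`(x₀, x)` cancels the cross terms and gives `∑ tᵢ tⱼ d(xᵢ, xⱼ) ≤ 0` for every integer vector `t`
with sum `0`. The form is homogeneous of degree two, so clearing denominators extends this to
rational vectors with sum `0`, and continuity extends it to real ones: composing with the centering
map `β ↦ β - mean β` turns the constraint `∑ αᵢ = 0` into a closed condition on all of `ℝⁿ`,
where rational vectors are dense.
-/

open Finset

section Center

variable {K : Type*} [Field K] {n : ℕ}

def center (β : Fin n → K) : Fin n → K := fun i => β i - (∑ k, β k) / n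

theorem sum_center [CharZero K] (β : Fin n → K) : ∑ i, center β i = 0 := by
  rcases n with _ | n
  · simp
  · have hn : (n : K) + 1 ≠ 0 := Nat.cast_add_one_ne_zero n
    simp [center, sum_sub_distrib, mul_div_cancel₀ _ hn]

theorem center_of_sum_eq_zero {β : Fin n → K} (hβ : ∑ i, β i = 0) : center β = β := by
  funext i
  simp [center, hβ]

theorem ratCast_center [CharZero K] (q : Fin n → ℚ) :
    (fun i => ((center q i : ℚ) : K)) = center fun i => (q i : K) := by
  ext i
  simp [center]

end Center

section Kernel

variable {X : Type*} (d : X → X → ℝ)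

def quadForm {n : ℕ} (x : Fin n → X) (α : Fin n → ℝ) : ℝ :=
  ∑ i, ∑ j, α i * α j * d (x i) (x j)

def IsHypermetric : Prop :=
  ∀ (n : ℕ) (x : Fin n → X) (t : Fin n → ℤ), ∑ i, t i = 1 → quadForm d x (fun i => (t i : ℝ)) ≤ 0

def IsNegativeDefinite : Prop :=
  ∀ (n : ℕ) (x : Fin n → X) (α : Fin n → ℝ), ∑ i, α i = 0 → quadForm d x α ≤ 0

variable {d}

theorem quadForm_cons {n : ℕ} (y : X) (x : Fin n → X) (a : ℝ) (α : Fin n → ℝ) :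
    quadForm d (Fin.cons y x) (Fin.cons a α) =
      a * a * d y y + ∑ j, a * α j * d y (x j) + ∑ i, α i * a * d (x i) y + quadForm d x α := by
  simp only [quadForm, Fin.sum_univ_succ, Fin.cons_zero, Fin.cons_succ, sum_add_distrib]
  ring

theorem quadForm_smul {n : ℕ} (x : Fin n → X) (c : ℝ) (α : Fin n → ℝ) :
    quadForm d x (c • α) = c ^ 2 * quadForm d x α := by
  simp only [quadForm, Pi.smul_apply, smul_eq_mul, mul_sum]
  exact sum_congr rfl fun i _ => sum_congr rfl fun j _ => by ring

theorem continuous_quadForm {n : ℕ} (x : Fin n → X) : Continuous (quadForm d x) := by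
  unfold quadForm
  fun_prop

theorem IsHypermetric.quadForm_intCast_nonpos (hdiag : ∀ y, d y y = 0) (h : IsHypermetric d)
    {n : ℕ} (x : Fin n → X) (t : Fin n → ℤ) (ht : ∑ i, t i = 0) :
    quadForm d x (fun i => (t i : ℝ)) ≤ 0 := by
  rcases n with _ | n
  · simp [quadForm]
  have hplus := h _ (Fin.cons (x 0) x) (Fin.cons 1 t) (by simp [Fin.sum_cons, ht])
  have hminus := h _ (Fin.cons (x 0) x) (Fin.cons 1 (-t)) (by simp [Fin.sum_cons, ht])
  have hcast : ∀ s : Fin (n + 1) → ℤ,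
      (fun i => ((Fin.cons 1 s : Fin (n + 2) → ℤ) i : ℝ)) = Fin.cons 1 fun i => (s i : ℝ) :=
    fun s => funext fun i => Fin.cases (by simp) (by simp) i
  have hneg : (fun i => ((-t) i : ℝ)) = (-1 : ℝ) • fun i => (t i : ℝ) := by
    funext i
    simp
  rw [hcast, quadForm_cons] at hplus hminus
  rw [hneg, quadForm_smul] at hminus
  simp only [hdiag, Pi.neg_apply, Int.cast_neg, neg_mul, mul_neg, sum_neg_distrib, neg_one_sq,
    one_mul, mul_one, mul_zero] at hplus hminus
  linarith

theorem IsHypermetric.quadForm_ratCast_nonpos (hdiag : ∀ y, d y y = 0) (h : IsHypermetric d)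
    {n : ℕ} (x : Fin n → X) (q : Fin n → ℚ) (hq : ∑ i, q i = 0) :
    quadForm d x (fun i => (q i : ℝ)) ≤ 0 := by
  obtain ⟨⟨b, hb⟩, hint⟩ := IsLocalization.exist_integer_multiples_of_finite (nonZeroDivisors ℤ) q
  choose t ht using hint
  have htq : ∀ i, (t i : ℚ) = b * q i := fun i => by simpa using ht i
  have htR : (fun i => (t i : ℝ)) = (b : ℝ) • fun i => (q i : ℝ) :=
    funext fun i => by simpa using congrArg (fun r : ℚ => (r : ℝ)) (htq i)
  have htsum : ∑ i, t i = 0 := by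
    have : ((∑ i, t i : ℤ) : ℚ) = 0 := by simp [htq, ← mul_sum, hq]
    exact_mod_cast this
  have hint := h.quadForm_intCast_nonpos hdiag x t htsum
  rw [htR, quadForm_smul] at hint
  have hb0 : (0 : ℝ) < (b : ℝ) ^ 2 := by
    have : (b : ℝ) ≠ 0 := by exact_mod_cast nonZeroDivisors.ne_zero hb
    positivity
  exact nonpos_of_mul_nonpos_right hint hb0

theorem IsHypermetric.isNegativeDefinite (hdiag : ∀ y, d y y = 0) (h : IsHypermetric d) :
    IsNegativeDefinite d := by
  intro n x α hα
  have hcentered : ∀ β : Fin n → ℝ, quadForm d x (center β) ≤ 0 := by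
    have hdense : DenseRange fun (q : Fin n → ℚ) i => (q i : ℝ) :=
      DenseRange.piMap fun _ => Rat.denseRange_cast
    refine fun β => hdense.induction_on β
      (isClosed_le ((continuous_quadForm x).comp (by unfold center; fun_prop)) continuous_const)
      fun q => ?_
    rw [← ratCast_center]
    exact h.quadForm_ratCast_nonpos hdiag x _ (sum_center q)
  simpa [center_of_sum_eq_zero hα] using hcentered α

end Kernel

/-- Every hypermetric space is negative definite. -/
theorem stmt15 {X : Type*} [MetricSpace X]
    (hyp : ∀ (n : ℕ) (x : Fin n → X) (t : Fin n → ℤ), (∑ i, t i) = 1 →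
      ∑ i, ∑ j, (t i : ℝ) * (t j : ℝ) * dist (x i) (x j) ≤ 0)
    (n : ℕ) (x : Fin n → X) (α : Fin n → ℝ) (hα : ∑ i, α i = 0) :
    ∑ i, ∑ j, α i * α j * dist (x i) (x j) ≤ 0 :=
  IsHypermetric.isNegativeDefinite dist_self hyp n x α hα
end

section
/- In a uniformly convex, complete metric space, every non-empty bounded subset has a unique circumcenter, i.e., a unique point minimizing the circumradius function r(x) = sup_{a∈A} d(x,a). -/
/-!
The circumradius `r` is 1-Lipschitz, and uniform convexity makes its sublevel sets
`{r ≤ R + η}` shrink to a point as `η → 0`, where `R = inf r`: if `x, y` are far apart, the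
midpoint of `x` and `y` has circumradius at most `(1 - δ) max (r x) (r y)`, which is below `R`
once `η` is small. Hence a minimizing sequence is Cauchy, its limit is a circumcenter, and any
two circumcenters are at distance `≤ ε` for every `ε > 0`.
-/

open Filter Topology Set

noncomputable section

def IsUniformlyConvex {X : Type*} [PseudoMetricSpace X] (mid : X → X → X) : Prop :=
  ∀ ε > (0 : ℝ), ∃ δ > (0 : ℝ), ∀ x y z : X,
    dist x y ≥ ε * max (dist z x) (dist z y) →
    dist z (mid x y) ≤ (1 - δ) * max (dist z x) (dist z y)

theorem existsUnique_forall_le_of_sublevel_dist_le {X : Type*} [MetricSpace X] [CompleteSpace X]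
    [Nonempty X] {f : X → ℝ} (hf : Continuous f) (hbdd : BddBelow (range f))
    (hsmall : ∀ ε > (0 : ℝ), ∃ η > (0 : ℝ), ∀ x y : X,
      f x ≤ (⨅ x, f x) + η → f y ≤ (⨅ x, f x) + η → dist x y ≤ ε) :
    ∃! c : X, ∀ x : X, f c ≤ f x := by
  set m := ⨅ x, f x
  obtain ⟨v, -, hv, hv_mem⟩ := exists_seq_tendsto_sInf (range_nonempty f) hbdd
  choose u hu using hv_mem
  have hfu : Tendsto (f ∘ u) atTop (𝓝 m) := by
    rw [show f ∘ u = v from funext hu]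
    exact hv
  have hcauchy : CauchySeq u := by
    refine Metric.cauchySeq_iff.2 fun ε hε => ?_
    obtain ⟨η, hη, hdist⟩ := hsmall (ε / 2) (half_pos hε)
    obtain ⟨N, hN⟩ := eventually_atTop.1 ((tendsto_order.1 hfu).2 (m + η) (by linarith))
    exact ⟨N, fun k hk n hn =>
      (hdist _ _ (hN k hk).le (hN n hn).le).trans_lt (half_lt_self hε)⟩
  obtain ⟨c, hc⟩ := cauchySeq_tendsto_of_complete hcauchy
  have hfc : f c = m := tendsto_nhds_unique ((hf.tendsto c).comp hc) hfu
  refine ⟨c, fun x => hfc ▸ ciInf_le hbdd x, fun y hy => eq_of_forall_dist_le fun ε hε => ?_⟩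
  obtain ⟨η, hη, hdist⟩ := hsmall ε hε
  have hym : f y ≤ m := le_ciInf hy
  exact hdist y c (by linarith) (by linarith)

namespace Metric

variable {X : Type*} [PseudoMetricSpace X] {A : Set X}

def circumradius (A : Set X) (x : X) : ℝ := ⨆ a : A, dist x a

def chebyshevRadius (A : Set X) : ℝ := ⨅ x, circumradius A x

theorem bddAbove_range_dist (hA : Bornology.IsBounded A) (x : X) :
    BddAbove (range fun a : A => dist x a) := by
  rcases A.eq_empty_or_nonempty with rfl | ⟨a₀, ha₀⟩
  · exact ⟨0, by rintro _ ⟨⟨a, ha⟩, -⟩; exact ha.elim⟩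
  refine ⟨dist x a₀ + diam A, ?_⟩
  rintro _ ⟨a, rfl⟩
  exact (dist_triangle x a₀ a).trans (by gcongr; exact dist_le_diam_of_mem hA ha₀ a.2)

theorem dist_le_circumradius (hA : Bornology.IsBounded A) (x : X) {a : X} (ha : a ∈ A) :
    dist x a ≤ circumradius A x :=
  le_ciSup (bddAbove_range_dist hA x) ⟨a, ha⟩

theorem circumradius_le (hne : A.Nonempty) {x : X} {B : ℝ} (h : ∀ a ∈ A, dist x a ≤ B) :
    circumradius A x ≤ B :=
  have : Nonempty A := hne.to_subtype
  ciSup_le fun a => h a a.2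

theorem circumradius_nonneg (A : Set X) (x : X) : 0 ≤ circumradius A x :=
  Real.iSup_nonneg fun _ => dist_nonneg

theorem bddBelow_range_circumradius (A : Set X) : BddBelow (range (circumradius A)) :=
  ⟨0, by rintro _ ⟨x, rfl⟩; exact circumradius_nonneg A x⟩

theorem chebyshevRadius_le_circumradius (A : Set X) (x : X) :
    chebyshevRadius A ≤ circumradius A x :=
  ciInf_le (bddBelow_range_circumradius A) x

theorem chebyshevRadius_nonneg (A : Set X) : 0 ≤ chebyshevRadius A :=
  Real.iInf_nonneg (circumradius_nonneg A)

theorem lipschitzWith_circumradius (hne : A.Nonempty) (hA : Bornology.IsBounded A) :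
    LipschitzWith 1 (circumradius A) :=
  LipschitzWith.of_le_add fun x y => circumradius_le hne fun a ha =>
    calc dist x a ≤ dist x y + dist y a := dist_triangle x y a
      _ ≤ circumradius A y + dist x y := by linarith [dist_le_circumradius hA y ha]

theorem dist_le_circumradius_add (hne : A.Nonempty) (hA : Bornology.IsBounded A) (x y : X) :
    dist x y ≤ circumradius A x + circumradius A y := by
  obtain ⟨a, ha⟩ := hne
  linarith [dist_triangle_right x y a, dist_le_circumradius hA x ha, dist_le_circumradius hA y ha]

theorem circumradius_mid_le (hne : A.Nonempty) (hA : Bornology.IsBounded A)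
    {mid : X → X → X} {x y : X} {ε δ M : ℝ} (hε : 0 ≤ ε) (hδ : δ ≤ 1)
    (hconv : ∀ z : X, dist x y ≥ ε * max (dist z x) (dist z y) →
      dist z (mid x y) ≤ (1 - δ) * max (dist z x) (dist z y))
    (hx : circumradius A x ≤ M) (hy : circumradius A y ≤ M) (hxy : ε * M ≤ dist x y) :
    circumradius A (mid x y) ≤ (1 - δ) * M := by
  refine circumradius_le hne fun a ha => ?_
  have hmax : max (dist a x) (dist a y) ≤ M := by
    rw [dist_comm a x, dist_comm a y]
    exact max_le ((dist_le_circumradius hA x ha).trans hx) ((dist_le_circumradius hA y ha).trans hy)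
  calc dist (mid x y) a = dist a (mid x y) := dist_comm _ _
    _ ≤ (1 - δ) * max (dist a x) (dist a y) :=
      hconv a ((mul_le_mul_of_nonneg_left hmax hε).trans hxy)
    _ ≤ (1 - δ) * M := mul_le_mul_of_nonneg_left hmax (by linarith)

end Metric

namespace IsUniformlyConvex

open Metric

variable {X : Type*} [PseudoMetricSpace X] {mid : X → X → X}

theorem exists_modulus_le_one (huc : IsUniformlyConvex mid) {ε : ℝ} (hε : 0 < ε) :
    ∃ δ > (0 : ℝ), δ ≤ 1 ∧ ∀ x y z : X,
      dist x y ≥ ε * max (dist z x) (dist z y) →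
      dist z (mid x y) ≤ (1 - δ) * max (dist z x) (dist z y) := by
  obtain ⟨δ, hδ, hconv⟩ := huc ε hε
  refine ⟨min δ 1, lt_min hδ one_pos, min_le_right _ _, fun x y z h => (hconv x y z h).trans ?_⟩
  gcongr
  exact min_le_left _ _

theorem dist_le_of_circumradius_le (huc : IsUniformlyConvex mid) {A : Set X}
    (hne : A.Nonempty) (hA : Bornology.IsBounded A) {ε : ℝ} (hε : 0 < ε) :
    ∃ η > (0 : ℝ), ∀ x y : X, circumradius A x ≤ chebyshevRadius A + η →
      circumradius A y ≤ chebyshevRadius A + η → dist x y ≤ ε := by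
  set R := chebyshevRadius A
  have hR0 : 0 ≤ R := chebyshevRadius_nonneg A
  rcases hR0.eq_or_lt with hR | hR
  · refine ⟨ε / 2, half_pos hε, fun x y hx hy => ?_⟩
    linarith [dist_le_circumradius_add hne hA x y]
  obtain ⟨δ, hδ, hδ1, hconv⟩ := huc.exists_modulus_le_one (div_pos hε (by linarith : 0 < R + 1))
  set η := min 1 (δ * R / 2)
  have hη_pos : 0 < η := lt_min one_pos (by positivity)
  refine ⟨η, hη_pos, fun x y hx hy => le_of_not_gt fun hfar => ?_⟩
  -- `x` and `y` are far apart at scale `R + 1 ≥ R + η`, so the midpoint beats the infimum `R`.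
  have hxy : ε / (R + 1) * (R + η) ≤ dist x y := calc
    ε / (R + 1) * (R + η) ≤ ε / (R + 1) * (R + 1) := by gcongr; exact min_le_left _ _
    _ = ε := div_mul_cancel₀ _ (by linarith)
    _ ≤ dist x y := hfar.le
  have hmid := circumradius_mid_le hne hA (by positivity) hδ1 (hconv x y) hx hy hxy
  have hRmid := chebyshevRadius_le_circumradius A (mid x y)
  have hη : η ≤ δ * R / 2 := min_le_right _ _
  nlinarith [mul_pos hδ hη_pos]

end IsUniformlyConvex

theorem stmt16_general {X : Type*} [MetricSpace X] [CompleteSpace X]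
    (mid : X → X → X)
    (uc : ∀ ε > (0 : ℝ), ∃ δ > (0 : ℝ), ∀ x y z : X,
      dist x y ≥ ε * max (dist z x) (dist z y) →
      dist z (mid x y) ≤ (1 - δ) * max (dist z x) (dist z y))
    (A : Set X) (hne : A.Nonempty) (hbd : Bornology.IsBounded A) :
    ∃! c : X, ∀ x : X, (⨆ a : A, dist c (a : X)) ≤ ⨆ a : A, dist x (a : X) := by
  have : Nonempty X := hne.to_subtype.map Subtype.val
  have huc : IsUniformlyConvex mid := uc
  exact existsUnique_forall_le_of_sublevel_dist_le
    (Metric.lipschitzWith_circumradius hne hbd).continuous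
    (Metric.bddBelow_range_circumradius A)
    fun ε hε => huc.dist_le_of_circumradius_le hne hbd hε

/-- In a uniformly convex complete metric space (formalized via a midpoint map
and a modulus of convexity), every non-empty bounded subset has a unique
circumcenter, i.e. a unique minimizer of `r(x) = sup_{a ∈ A} d(x,a)`. -/
theorem stmt16 {X : Type*} [MetricSpace X] [CompleteSpace X]
    (mid : X → X → X)
    (hmid : ∀ x y : X, dist x (mid x y) = dist x y / 2 ∧
                       dist (mid x y) y = dist x y / 2)
    (uc : ∀ ε > (0 : ℝ), ∃ δ > (0 : ℝ), ∀ x y z : X,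
      dist x y ≥ ε * max (dist z x) (dist z y) →
      dist z (mid x y) ≤ (1 - δ) * max (dist z x) (dist z y))
    (A : Set X) (hne : A.Nonempty) (hbd : Bornology.IsBounded A) :
    ∃! c : X, ∀ x : X, (⨆ a : A, dist c (a : X)) ≤ ⨆ a : A, dist x (a : X) :=
  stmt16_general mid uc A hne hbd
end
end

section
/- In a median graph, the path metric coincides with the wall metric: the distance between two vertices equals the number of walls separating them, where walls are given by the halfspaces of the median structure. -/
/-- Geodesic interval in a graph for the path metric. -/
def graphInterval {V : Type*} (G : SimpleGraph V) (x y : V) : Set V :=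
  {z | G.dist x z + G.dist z y = G.dist x y}

/-- Convex subsets for the path metric. -/
def graphConvex {V : Type*} (G : SimpleGraph V) (A : Set V) : Prop :=
  ∀ x ∈ A, ∀ y ∈ A, graphInterval G x y ⊆ A

/-- Halfspaces of the median structure: convex sets with convex complement. -/
def graphHalfspace {V : Type*} (G : SimpleGraph V) (H : Set V) : Prop :=
  graphConvex G H ∧ graphConvex G Hᶜ

/-! For an edge `ab`, the median of `z`, `a`, `b` is `a` or `b`, so every vertex is strictly closer
to one end of the edge and `H_{ab}`, `H_{ba}` partition the vertices. The heart of the proof is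
that `H_{ab}` is convex: an edge `x x₁` leaving `H_{ab}` satisfies `H_{ab} ⊆ H_{x x₁}` (by induction
on `d(x, a)`, through squares supplied by medians), which forbids `x₁` from lying on a geodesic
from `x` back into `H_{ab}`. So `H_{ab}` is the unique halfspace containing `a` but not `b`, and
along a geodesic from `u` to `v` each edge contributes exactly one new separating halfspace. -/

open SimpleGraph

section

variable {V : Type*} {G : SimpleGraph V}

def HasUniqueMedians (G : SimpleGraph V) : Prop :=
  ∀ x y z : V, ∃! m : V,
    m ∈ graphInterval G x y ∧ m ∈ graphInterval G y z ∧ m ∈ graphInterval G z x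

/-- The halfspace `H_{ab}` of the edge `ab`. -/
def edgeHalfspace (G : SimpleGraph V) (a b : V) : Set V :=
  {z | G.dist z a < G.dist z b}

def separatingHalfspaces (G : SimpleGraph V) (a b : V) : Set (Set V) :=
  {H | graphHalfspace G H ∧ a ∈ H ∧ b ∉ H}

@[simp]
theorem mem_graphInterval {x y z : V} :
    z ∈ graphInterval G x y ↔ G.dist x z + G.dist z y = G.dist x y :=
  Iff.rfl

theorem SimpleGraph.Connected.exists_adj_dist_add_one_eq (hconn : G.Connected) {a b : V}
    (h : G.dist a b ≠ 0) : ∃ c, G.Adj a c ∧ G.dist c b + 1 = G.dist a b := by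
  obtain ⟨p, hp⟩ := hconn.exists_walk_length_eq_dist a b
  cases p with
  | nil => simp at h
  | @cons _ c _ hac q =>
    refine ⟨c, hac, le_antisymm ?_ ?_⟩
    · have := dist_le q
      simp only [Walk.length_cons] at hp
      omega
    · have := hconn.dist_triangle (u := a) (v := c) (w := b)
      rw [dist_eq_one_iff_adj.mpr hac] at this
      omega

namespace HasUniqueMedians

theorem dist_eq_add_one_or (hconn : G.Connected) (hmed : HasUniqueMedians G) {a b : V}
    (hab : G.Adj a b) (z : V) :
    G.dist z b = G.dist z a + 1 ∨ G.dist z a = G.dist z b + 1 := by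
  obtain ⟨m, ⟨hzam, habm, hbzm⟩, -⟩ := hmed z a b
  simp only [mem_graphInterval] at hzam habm hbzm
  have hab' := dist_eq_one_iff_adj.mpr hab
  rcases Nat.eq_zero_or_pos (G.dist a m) with ham | ham
  · obtain rfl := hconn.dist_eq_zero_iff.mp ham
    grind [SimpleGraph.dist_comm]
  · obtain rfl := hconn.dist_eq_zero_iff.mp (show G.dist m b = 0 by omega)
    grind [SimpleGraph.dist_comm]

theorem mem_edgeHalfspace_iff (hconn : G.Connected) (hmed : HasUniqueMedians G) {a b z : V}
    (hab : G.Adj a b) : z ∈ edgeHalfspace G a b ↔ G.dist z b = G.dist z a + 1 := by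
  rcases hmed.dist_eq_add_one_or hconn hab z with h | h <;>
    simp only [edgeHalfspace, Set.mem_ofPred_eq] <;> omega

theorem compl_edgeHalfspace (hconn : G.Connected) (hmed : HasUniqueMedians G) {a b : V}
    (hab : G.Adj a b) : (edgeHalfspace G a b)ᶜ = edgeHalfspace G b a := by
  ext z
  rcases hmed.dist_eq_add_one_or hconn hab z with h | h <;>
    simp only [edgeHalfspace, Set.mem_compl_iff, Set.mem_ofPred_eq] <;> omega

/-- A vertex `y ∈ H_{ad} \ H_{bc}` would make both `a` and `c` medians of `b`, `d`, `y`. -/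
theorem edgeHalfspace_subset_of_square (hconn : G.Connected) (hmed : HasUniqueMedians G)
    {a b c d : V} (hab : G.Adj a b) (hbc : G.Adj b c) (hcd : G.Adj c d) (hda : G.Adj d a)
    (hbd : G.dist b d = 2) (hac : a ≠ c) : edgeHalfspace G a d ⊆ edgeHalfspace G b c := by
  intro y hy
  rw [mem_edgeHalfspace_iff hconn hmed hda.symm] at hy
  rw [mem_edgeHalfspace_iff hconn hmed hbc]
  by_contra hyc
  have hab_y := hmed.dist_eq_add_one_or hconn hab y
  have hcd_y := hmed.dist_eq_add_one_or hconn hcd y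
  have hbc_y := hmed.dist_eq_add_one_or hconn hbc y
  have hmedian : ∀ e, G.Adj b e → G.Adj e d → G.dist y e = G.dist y a →
      e ∈ graphInterval G b d ∧ e ∈ graphInterval G d y ∧ e ∈ graphInterval G y b := by
    intro e hbe hed hye
    have := dist_eq_one_iff_adj.mpr hbe
    have := dist_eq_one_iff_adj.mpr hed
    simp only [mem_graphInterval]
    grind [SimpleGraph.dist_comm]
  obtain ⟨m, -, huniq⟩ := hmed b d y
  exact hac ((huniq a (hmedian a hab.symm hda.symm rfl)).trans
    (huniq c (hmedian c hbc hcd (by omega))).symm)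

theorem exists_square_of_crossing (hconn : G.Connected) (hmed : HasUniqueMedians G)
    {u w x x₁ x' : V} (huw : G.Adj u w) (hxx₁ : G.Adj x x₁) (hxx' : G.Adj x x')
    (hx : G.dist x w = G.dist x u + 1) (hx₁ : G.dist x₁ u = G.dist x₁ w + 1)
    (hx' : G.dist x' u + 1 = G.dist x u) :
    ∃ s, G.Adj x' s ∧ G.Adj x₁ s ∧ G.dist x' w = G.dist x' u + 1 ∧
      G.dist s u = G.dist s w + 1 ∧ G.dist x s = 2 ∧ x' ≠ x₁ := by
  have hx'w := hconn.dist_triangle (u := x') (v := u) (w := w)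
  have hxw := hconn.dist_triangle (u := x) (v := x') (w := w)
  have hx₁u := hconn.dist_triangle (u := x₁) (v := x) (w := u)
  have hx₁w := hconn.dist_triangle (u := x) (v := x₁) (w := w)
  have hx'x₁ := hconn.dist_triangle (u := x') (v := x) (w := x₁)
  have := dist_eq_one_iff_adj.mpr huw
  have := dist_eq_one_iff_adj.mpr hxx'
  have := dist_eq_one_iff_adj.mpr hxx₁
  have hne : x' ≠ x₁ := by rintro rfl; grind [SimpleGraph.dist_comm]
  have hx'x₁_pos := hconn.pos_dist_of_ne hne
  obtain ⟨s, ⟨hs₁, hs₂, hs₃⟩, -⟩ := hmed x' x₁ w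
  simp only [mem_graphInterval] at hs₁ hs₂ hs₃
  have hsx' : G.dist x' s = 1 := by
    have : G.dist x' s ≠ 0 := fun h ↦ by
      obtain rfl := hconn.dist_eq_zero_iff.mp h
      grind [SimpleGraph.dist_comm]
    grind [SimpleGraph.dist_comm]
  have hsx₁ : G.dist x₁ s = 1 := by grind [SimpleGraph.dist_comm]
  have hsu := hconn.dist_triangle (u := x₁) (v := s) (w := u)
  have hsu' := hconn.dist_triangle (u := s) (v := w) (w := u)
  have hxs := hconn.dist_triangle (u := x) (v := s) (w := w)
  have hxs' := hconn.dist_triangle (u := x) (v := x₁) (w := s)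
  refine ⟨s, dist_eq_one_iff_adj.mp hsx', dist_eq_one_iff_adj.mp hsx₁, ?_, ?_, ?_, hne⟩ <;>
    grind [SimpleGraph.dist_comm]

/-- Induct on `d(x, u)`: a neighbour `x'` of `x` closer to `u` spans a square `x' x x₁ s` whose
edge `x' s` crosses closer to `uw`. -/
theorem edgeHalfspace_subset_of_crossing (hconn : G.Connected) (hmed : HasUniqueMedians G)
    {u w x x₁ : V} (huw : G.Adj u w) (hxx₁ : G.Adj x x₁) (hx : x ∈ edgeHalfspace G u w)
    (hx₁ : x₁ ∈ edgeHalfspace G w u) : edgeHalfspace G u w ⊆ edgeHalfspace G x x₁ := by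
  rw [mem_edgeHalfspace_iff hconn hmed huw] at hx
  rw [mem_edgeHalfspace_iff hconn hmed huw.symm] at hx₁
  induction hk : G.dist x u generalizing x x₁ with
  | zero =>
    obtain rfl := hconn.dist_eq_zero_iff.mp hk
    rw [dist_eq_one_iff_adj.mpr hxx₁.symm] at hx₁
    obtain rfl := hconn.dist_eq_zero_iff.mp (by omega : G.dist x₁ w = 0)
    exact subset_rfl
  | succ k ih =>
    obtain ⟨x', hxx', hx'⟩ := hconn.exists_adj_dist_add_one_eq (by omega : G.dist x u ≠ 0)
    obtain ⟨s, hx's, hx₁s, hx'w, hsu, hxs, hne⟩ :=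
      exists_square_of_crossing hconn hmed huw hxx₁ hxx' hx hx₁ hx'
    exact (ih hx's hx'w hsu (by omega)).trans
      (edgeHalfspace_subset_of_square hconn hmed hxx'.symm hxx₁ hx₁s hx's.symm hxs hne)

theorem mem_edgeHalfspace_of_adj_of_mem_graphInterval (hconn : G.Connected)
    (hmed : HasUniqueMedians G) {u w x y x₁ : V} (huw : G.Adj u w)
    (hx : x ∈ edgeHalfspace G u w) (hy : y ∈ edgeHalfspace G u w) (hxx₁ : G.Adj x x₁)
    (hx₁ : x₁ ∈ graphInterval G x y) : x₁ ∈ edgeHalfspace G u w := by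
  by_contra h
  rw [← Set.mem_compl_iff, compl_edgeHalfspace hconn hmed huw] at h
  have hyx := edgeHalfspace_subset_of_crossing hconn hmed huw hxx₁ hx h hy
  rw [mem_graphInterval, dist_eq_one_iff_adj.mpr hxx₁] at hx₁
  simp only [edgeHalfspace, Set.mem_ofPred_eq] at hyx
  grind [SimpleGraph.dist_comm]

theorem graphConvex_edgeHalfspace (hconn : G.Connected) (hmed : HasUniqueMedians G) {u w : V}
    (huw : G.Adj u w) : graphConvex G (edgeHalfspace G u w) := by
  intro x hx y hy z hz
  rw [mem_graphInterval] at hz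
  induction hn : G.dist x z generalizing x with
  | zero => rwa [← hconn.dist_eq_zero_iff.mp hn]
  | succ n ih =>
    obtain ⟨x₁, hxx₁, hx₁z⟩ := hconn.exists_adj_dist_add_one_eq (by omega : G.dist x z ≠ 0)
    have hx₁y := hconn.dist_triangle (u := x₁) (v := z) (w := y)
    have hxy := hconn.dist_triangle (u := x) (v := x₁) (w := y)
    rw [dist_eq_one_iff_adj.mpr hxx₁] at hxy
    refine ih x₁ (mem_edgeHalfspace_of_adj_of_mem_graphInterval hconn hmed huw hx hy hxx₁ ?_)
      (by omega) (by omega)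
    rw [mem_graphInterval, dist_eq_one_iff_adj.mpr hxx₁]
    omega

theorem graphHalfspace_edgeHalfspace (hconn : G.Connected) (hmed : HasUniqueMedians G) {u w : V}
    (huw : G.Adj u w) : graphHalfspace G (edgeHalfspace G u w) := by
  refine ⟨graphConvex_edgeHalfspace hconn hmed huw, ?_⟩
  rw [compl_edgeHalfspace hconn hmed huw]
  exact graphConvex_edgeHalfspace hconn hmed huw.symm

theorem eq_edgeHalfspace_of_mem_of_notMem (hconn : G.Connected) (hmed : HasUniqueMedians G)
    {u w : V} {H : Set V} (huw : G.Adj u w) (hH : graphHalfspace G H) (hu : u ∈ H)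
    (hw : w ∉ H) : H = edgeHalfspace G u w := by
  have := dist_eq_one_iff_adj.mpr huw
  ext z
  constructor
  · intro hz
    by_contra hzw
    rw [← Set.mem_compl_iff, compl_edgeHalfspace hconn hmed huw,
      mem_edgeHalfspace_iff hconn hmed huw.symm] at hzw
    exact hw (hH.1 z hz u hu (by rw [mem_graphInterval]; grind [SimpleGraph.dist_comm]))
  · intro hz
    by_contra hzu
    rw [mem_edgeHalfspace_iff hconn hmed huw] at hz
    exact hH.2 z hzu w hw (by rw [mem_graphInterval]; grind [SimpleGraph.dist_comm]) hu

theorem separatingHalfspaces_eq_insert (hconn : G.Connected) (hmed : HasUniqueMedians G)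
    {a b c : V} (hac : G.Adj a c) (hcb : G.dist c b + 1 = G.dist a b) :
    separatingHalfspaces G a b =
      insert (edgeHalfspace G a c) (separatingHalfspaces G c b) := by
  have hac' := dist_eq_one_iff_adj.mpr hac
  have hc : c ∈ graphInterval G a b := by rw [mem_graphInterval]; omega
  ext H
  simp only [separatingHalfspaces, Set.mem_insert_iff, Set.mem_ofPred_eq]
  constructor
  · rintro ⟨hH, ha, hb⟩
    by_cases hcH : c ∈ H
    · exact Or.inr ⟨hH, hcH, hb⟩
    · exact Or.inl (eq_edgeHalfspace_of_mem_of_notMem hconn hmed hac hH ha hcH)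
  · rintro (rfl | ⟨hH, hcH, hb⟩)
    · refine ⟨graphHalfspace_edgeHalfspace hconn hmed hac, ?_, ?_⟩ <;>
        simp only [edgeHalfspace, Set.mem_ofPred_eq, dist_self] <;>
        grind [SimpleGraph.dist_comm]
    · exact ⟨hH, by_contra fun ha ↦ hH.2 a ha b hb hc hcH, hb⟩

theorem encard_separatingHalfspaces (hconn : G.Connected) (hmed : HasUniqueMedians G)
    (a b : V) : (separatingHalfspaces G a b).encard = G.dist a b := by
  induction hn : G.dist a b generalizing a with
  | zero =>
    obtain rfl := hconn.dist_eq_zero_iff.mp hn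
    simp [separatingHalfspaces]
  | succ n ih =>
    obtain ⟨c, hac, hcb⟩ := hconn.exists_adj_dist_add_one_eq (by omega : G.dist a b ≠ 0)
    have hnotMem : edgeHalfspace G a c ∉ separatingHalfspaces G c b := fun h ↦ by
      simpa [edgeHalfspace] using h.2.1
    rw [separatingHalfspaces_eq_insert hconn hmed hac hcb, Set.encard_insert_of_notMem hnotMem,
      ih c (by omega)]
    norm_cast

end HasUniqueMedians

end

/-- In a median graph, the path metric coincides with the wall metric:
the distance between two vertices equals the number of walls separating them,
i.e. the number of halfspaces containing the first but not the second. -/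
theorem stmt19 {V : Type*} (G : SimpleGraph V) (hconn : G.Connected)
    (hmed : ∀ x y z : V, ∃! m : V,
      m ∈ graphInterval G x y ∧ m ∈ graphInterval G y z ∧ m ∈ graphInterval G z x)
    (u v : V) :
    G.dist u v = Nat.card {H : Set V // graphHalfspace G H ∧ u ∈ H ∧ v ∉ H} := by
  calc G.dist u v = (separatingHalfspaces G u v).encard.toNat := by
        rw [HasUniqueMedians.encard_separatingHalfspaces hconn hmed u v, ENat.toNat_natCast]
    _ = Nat.card {H : Set V // graphHalfspace G H ∧ u ∈ H ∧ v ∉ H} := rfl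
end
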